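/- arXiv:2210.12966 — 2 statements merged into one kernel-verified Lean document; each statement's English description precedes it below -/
import Mathlib

section
/- Let r > 1 be a real number. The number of positive integers n such that there exists z ∈ ℂ with Im z ≥ 1, |z| = r and |z - n| = r equals ⌊2·√(r² - 1)⌋. -/
/-!
The circles `|z| = r` and `|z - t| = r` are mirror images in the line `Re z = t / 2`, so they meet
above height `1` exactly when their top intersection point `t / 2 + i √(r² - (t/2)²)` does, i.e.
when `(t / 2)² + 1 ≤ r²`. For a positive integer `t = n` this reads `n ≤ 2 √(r² - 1)`, and there
are `⌊2 √(r² - 1)⌋` such `n`.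
-/

open Complex

theorem Complex.norm_eq_iff_re_sq_add_im_sq {z : ℂ} {r : ℝ} (hr : 0 ≤ r) :
    ‖z‖ = r ↔ z.re ^ 2 + z.im ^ 2 = r ^ 2 := by
  rw [← sq_eq_sq₀ (norm_nonneg z) hr, Complex.sq_norm, normSq_apply, ← sq, ← sq]

theorem exists_one_le_im_norm_eq_norm_sub_eq_iff {r : ℝ} (hr : 0 ≤ r) (t : ℝ) :
    (∃ z : ℂ, 1 ≤ z.im ∧ ‖z‖ = r ∧ ‖z - t‖ = r) ↔ (t / 2) ^ 2 + 1 ≤ r ^ 2 := by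
  simp only [norm_eq_iff_re_sq_add_im_sq hr, sub_re, sub_im, ofReal_re, ofReal_im, sub_zero]
  constructor
  · rintro ⟨z, him, hz, hzt⟩
    -- parallelogram law: `t ^ 2 + (2 z.re - t) ^ 2 = 2 (z.re ^ 2 + (z.re - t) ^ 2)`
    nlinarith [sq_nonneg (2 * z.re - t)]
  · intro ht
    have hb : (t / 2) ^ 2 + √(r ^ 2 - (t / 2) ^ 2) ^ 2 = r ^ 2 := by
      rw [Real.sq_sqrt (by linarith)]; ring
    refine ⟨⟨t / 2, √(r ^ 2 - (t / 2) ^ 2)⟩, ?_, hb, by linear_combination hb⟩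
    exact Real.one_le_sqrt.mpr (by linarith)

theorem ncard_setOf_pos_natCast_le {R : Type*} [Semiring R] [LinearOrder R]
    [IsStrictOrderedRing R] [FloorSemiring R] (x : R) : {n : ℕ | 0 < n ∧ (n : R) ≤ x}.ncard = ⌊x⌋₊ := by
  have : {n : ℕ | 0 < n ∧ (n : R) ≤ x} = (Finset.Icc 1 ⌊x⌋₊ : Set ℕ) := by
    ext n
    simp only [Set.mem_ofPred_eq, Finset.coe_Icc, Set.mem_Icc, Nat.one_le_iff_ne_zero,
      Nat.pos_iff_ne_zero]
    exact and_congr_right fun hn => (Nat.le_floor_iff' (a := x) hn).symm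
  rw [this, Set.ncard_coe_finset, Nat.card_Icc, Nat.add_sub_cancel]

/-- For `r > 1`, the number of positive integers `n` such that there is `z ∈ ℂ` with
`Im z ≥ 1`, `|z| = r` and `|z - n| = r` equals `⌊2·√(r² - 1)⌋`. -/
theorem card_semicircle_translates (r : ℝ) (hr : r > 1) :
    (({n : ℕ | 0 < n ∧
        ∃ z : ℂ, 1 ≤ z.im ∧ ‖z‖ = r ∧ ‖z - (n : ℂ)‖ = r}).ncard : ℤ)
      = ⌊2 * Real.sqrt (r ^ 2 - 1)⌋ := by
  have hmem : {n : ℕ | 0 < n ∧ ∃ z : ℂ, 1 ≤ z.im ∧ ‖z‖ = r ∧ ‖z - (n : ℂ)‖ = r}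
      = {n : ℕ | 0 < n ∧ (n : ℝ) ≤ 2 * √(r ^ 2 - 1)} := by
    ext n
    refine and_congr_right fun hn => ?_
    rw [← ofReal_natCast, exists_one_le_im_norm_eq_norm_sub_eq_iff (by linarith),
      ← div_le_iff₀' two_pos, Real.le_sqrt' (by positivity), le_sub_iff_add_le]
  rw [hmem, ncard_setOf_pos_natCast_le, Int.natCast_floor_eq_floor (by positivity)]
end

section
/- Let N > e be a real number and let p and q be points of the hyperbolic upper half-plane ℍ. Let T denote the horizontal translation z ↦ z + 1 of ℍ. If dist(p, T(p)) = 2·arsinh(1) and dist(q, T(q)) ≤ 2/N, then dist(p, q) ≥ log(1/sinh(1/N)). -/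
/-!
The translation `z ↦ z + 1` moves a point of height `y` by `2·arsinh (1 / (2y))`, so `p` has
height `1/2` and `q` has height at least `1 / (2·sinh (1/N))`. The hyperbolic distance dominates
the logarithm of the ratio of heights, which is `log (1 / sinh (1/N))` at least.
-/

open UpperHalfPlane Real

namespace UpperHalfPlane

theorem sinh_half_dist_of_coe_eq_add_real {z w : ℍ} {t : ℝ} (h : (w : ℂ) = z + t) :
    sinh (dist z w / 2) = |t| / (2 * z.im) := by
  have him : w.im = z.im := by simpa using congrArg Complex.im h
  rw [sinh_half_dist, him, sqrt_mul_self z.im_pos.le, h, dist_self_add_right, Complex.norm_real,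
    Real.norm_eq_abs]

theorem log_im_div_im_le_dist (z w : ℍ) : log (w.im / z.im) ≤ dist z w := by
  rw [log_le_iff_le_exp (div_pos w.im_pos z.im_pos), div_le_iff₀ z.im_pos, mul_comm,
    UpperHalfPlane.dist_comm]
  exact im_le_im_mul_exp_dist w z

end UpperHalfPlane

theorem dist_thick_to_thin_cusp_general (N : ℝ)
    (p q Tp Tq : UpperHalfPlane)
    (hTp : (Tp : ℂ) = (p : ℂ) + 1) (hTq : (Tq : ℂ) = (q : ℂ) + 1)
    (hp : dist p Tp = 2 * Real.arsinh 1) (hq : dist q Tq ≤ 2 / N) :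
    dist p q ≥ Real.log (1 / Real.sinh (1 / N)) := by
  have hp_im : p.im = 1 / 2 := by
    have h := sinh_half_dist_of_coe_eq_add_real (t := 1) (by exact_mod_cast hTp)
    rw [hp, mul_div_cancel_left₀ _ two_ne_zero, sinh_arsinh, abs_one,
      eq_div_iff (by positivity)] at h
    linarith
  have hq_im : 1 / (2 * q.im) ≤ sinh (1 / N) := by
    have h := sinh_half_dist_of_coe_eq_add_real (t := 1) (by exact_mod_cast hTq)
    rw [abs_one] at h
    rw [← h, sinh_le_sinh]
    linarith [show 2 / N = 2 * (1 / N) by ring]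
  have hsinh_pos : 0 < sinh (1 / N) := lt_of_lt_of_le (by positivity) hq_im
  calc log (1 / sinh (1 / N)) ≤ log (q.im / p.im) := by
        apply log_le_log (one_div_pos.mpr hsinh_pos)
        rw [hp_im, div_div_eq_mul_div, div_one, mul_comm]
        exact (one_div_le hsinh_pos (by positivity)).mpr hq_im
    _ ≤ dist p q := log_im_div_im_le_dist p q

/-- If the parabolic translation `z ↦ z + 1` displaces `p` by `2·arsinh 1` and `q` by at most
`2/N` (with `N > e`), then `dist p q ≥ log(1/sinh(1/N))`. -/
theorem dist_thick_to_thin_cusp (N : ℝ) (hN : N > Real.exp 1)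
    (p q Tp Tq : UpperHalfPlane)
    (hTp : (Tp : ℂ) = (p : ℂ) + 1) (hTq : (Tq : ℂ) = (q : ℂ) + 1)
    (hp : dist p Tp = 2 * Real.arsinh 1) (hq : dist q Tq ≤ 2 / N) :
    dist p q ≥ Real.log (1 / Real.sinh (1 / N)) :=
  dist_thick_to_thin_cusp_general N p q Tp Tq hTp hTq hp hq
end
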